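/- arXiv:math/0610650 — 9 statements merged into one kernel-verified Lean document; each statement's English description precedes it below -/
import Mathlib

section
/- Let k be a field and let k[t_i, t_j, t_k, t_l] be the polynomial ring over k in four variables. Then the pair (t_i + t_j − t_k − t_l, t_i t_j − t_k t_l) is a regular sequence in k[t_i, t_j, t_k, t_l]; that is, t_i + t_j − t_k − t_l is a non-zerodivisor on k[t_i, t_j, t_k, t_l], and t_i t_j − t_k t_l is a non-zerodivisor on the quotient k[t_i, t_j, t_k, t_l]/(t_i + t_j − t_k − t_l). -/
open MvPolynomial

/-- In `k[tᵢ, tⱼ, tₖ, tₗ]` (here `tᵢ = X 0`, `tⱼ = X 1`, `tₖ = X 2`, `tₗ = X 3`),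
the pair `(tᵢ + tⱼ − tₖ − tₗ, tᵢtⱼ − tₖtₗ)` is a regular sequence:
the first element is a non-zerodivisor on the ring, and the second is a
non-zerodivisor on the quotient by the first. -/
theorem regular_sequence_crossing (k : Type*) [Field k] :
    (∀ f : MvPolynomial (Fin 4) k,
      (X 0 + X 1 - X 2 - X 3 : MvPolynomial (Fin 4) k) * f = 0 → f = 0) ∧
    (∀ y : MvPolynomial (Fin 4) k ⧸
        Ideal.span {(X 0 + X 1 - X 2 - X 3 : MvPolynomial (Fin 4) k)},
      Ideal.Quotient.mk (Ideal.span {(X 0 + X 1 - X 2 - X 3 : MvPolynomial (Fin 4) k)})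
          (X 0 * X 1 - X 2 * X 3) * y = 0 → y = 0) := by
  have hp0 : (X 0 + X 1 - X 2 - X 3 : MvPolynomial (Fin 4) k) ≠ 0 := by
    intro h
    have := congrArg (eval (fun i : Fin 4 => if i = 0 then (1:k) else 0)) h
    simp at this
  set p : MvPolynomial (Fin 4) k := X 0 + X 1 - X 2 - X 3 with hpdef
  set ψ : MvPolynomial (Fin 4) k →ₐ[k] MvPolynomial (Fin 4) k :=
    aeval (fun i : Fin 4 => if i = 0 then X 2 + X 3 - X 1 else X i) with hψ
  have hne1 : (1:Fin 4) ≠ 0 := by decide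
  have hne2 : (2:Fin 4) ≠ 0 := by decide
  have hne3 : (3:Fin 4) ≠ 0 := by decide
  have hψp : ψ p = 0 := by
    simp only [hψ, hpdef, map_add, map_sub, aeval_X, if_true, if_pos rfl, if_neg hne1,
      if_neg hne2, if_neg hne3]
    ring
  have key : ∀ f : MvPolynomial (Fin 4) k, f - ψ f ∈ Ideal.span {p} := by
    intro f
    induction f using MvPolynomial.induction_on with
    | C a => simp [hψ]
    | add f g hf hg =>
        have := Ideal.add_mem _ hf hg
        simpa [map_add, add_sub_add_comm] using this
    | mul_X f i hf =>
        have h1 : f * X i - ψ (f * X i)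
            = (f - ψ f) * X i + ψ f * (X i - ψ (X i)) := by
          rw [map_mul]; ring
        rw [h1]
        apply Ideal.add_mem
        · exact Ideal.mul_mem_right _ _ hf
        · rcases eq_or_ne i 0 with h0 | h0
          · subst h0
            have : (X 0 - ψ (X 0) : MvPolynomial (Fin 4) k) = p := by
              simp only [hψ, aeval_X, if_true, if_pos rfl, hpdef]
              ring
            rw [this]
            exact Ideal.mul_mem_left _ _ (Ideal.subset_span rfl)
          · have : (X i - ψ (X i) : MvPolynomial (Fin 4) k) = 0 := by
              simp [hψ, aeval_X, if_neg h0]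
            rw [this, mul_zero]
            exact Ideal.zero_mem _
  have hker : ∀ f : MvPolynomial (Fin 4) k, ψ f = 0 → f ∈ Ideal.span {p} := by
    intro f h
    simpa [h] using key f
  have hI : Ideal.span {p} = RingHom.ker ψ.toRingHom := by
    apply le_antisymm
    · rw [Ideal.span_singleton_le_iff_mem]
      exact hψp
    · intro f hf
      exact hker f hf
  haveI hprime : (Ideal.span {p}).IsPrime := by
    rw [hI]
    exact RingHom.ker_isPrime ψ.toRingHom
  have hg : ψ (X 0 * X 1 - X 2 * X 3) ≠ 0 := by
    have hcomp : ψ (X 0 * X 1 - X 2 * X 3)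
        = (X 2 + X 3 - X 1) * X 1 - X 2 * X 3 := by
      simp only [hψ, map_sub, map_mul, aeval_X, if_true, if_pos rfl, if_neg hne1,
        if_neg hne2, if_neg hne3]
    rw [hcomp]
    intro h
    have := congrArg (eval (fun i : Fin 4 => if i = 1 then (1:k) else 0)) h
    simp at this
  refine ⟨?_, ?_⟩
  · intro f hf
    rcases mul_eq_zero.mp hf with h | h
    · exact absurd h hp0
    · exact h
  · intro y hy
    rcases mul_eq_zero.mp hy with h | h
    · exfalso
      apply hg
      have hmem : (X 0 * X 1 - X 2 * X 3 : MvPolynomial (Fin 4) k) ∈ Ideal.span {p} :=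
        (Ideal.Quotient.eq_zero_iff_mem).mp h
      rw [hI] at hmem
      exact hmem
    · exact h
end

section
/- Let k be a field and let k[t_i, t_j, t_k, t_l] be the polynomial ring over k in four variables. For every one-variable polynomial p ∈ k[T], the element p(t_i) + p(t_j) − p(t_k) − p(t_l) lies in the ideal of k[t_i, t_j, t_k, t_l] generated by t_i + t_j − t_k − t_l and t_i t_j − t_k t_l. -/
open MvPolynomial

lemma pow_mem_crossing_ideal (k : Type*) [Field k] (n : ℕ) :
    ((X 0 : MvPolynomial (Fin 4) k)^n + (X 1)^n - (X 2)^n - (X 3)^n)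
      ∈ Ideal.span {(X 0 + X 1 - X 2 - X 3 : MvPolynomial (Fin 4) k),
          X 0 * X 1 - X 2 * X 3} := by
  set I := Ideal.span {(X 0 + X 1 - X 2 - X 3 : MvPolynomial (Fin 4) k),
          X 0 * X 1 - X 2 * X 3} with hI
  have hg1 : (X 0 + X 1 - X 2 - X 3 : MvPolynomial (Fin 4) k) ∈ I :=
    Ideal.subset_span (by simp)
  have hg2 : (X 0 * X 1 - X 2 * X 3 : MvPolynomial (Fin 4) k) ∈ I :=
    Ideal.subset_span (by simp)
  induction n using Nat.strong_induction_on with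
  | _ n ih =>
    match n with
    | 0 => simp
    | 1 => simpa using hg1
    | (m + 2) =>
      have h1 := ih (m + 1) (by omega)
      have h0 := ih m (by omega)
      have key : ((X 0 : MvPolynomial (Fin 4) k)^(m+2) + (X 1)^(m+2) - (X 2)^(m+2)
            - (X 3)^(m+2))
          = (X 0 + X 1) * ((X 0)^(m+1) + (X 1)^(m+1) - (X 2)^(m+1) - (X 3)^(m+1))
            - (X 0 * X 1) * ((X 0)^m + (X 1)^m - (X 2)^m - (X 3)^m)
            + ((X 2)^(m+1) + (X 3)^(m+1)) * (X 0 + X 1 - X 2 - X 3)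
            - ((X 2)^m + (X 3)^m) * (X 0 * X 1 - X 2 * X 3) := by ring
      rw [key]
      exact I.sub_mem (I.add_mem (I.sub_mem (I.mul_mem_left _ h1) (I.mul_mem_left _ h0))
        (I.mul_mem_left _ hg1)) (I.mul_mem_left _ hg2)

/-- For any one-variable polynomial `p` over `k`, the element
`p(tᵢ) + p(tⱼ) − p(tₖ) − p(tₗ)` of `k[tᵢ, tⱼ, tₖ, tₗ]` lies in the ideal
generated by `tᵢ + tⱼ − tₖ − tₗ` and `tᵢtⱼ − tₖtₗ`
(here `tᵢ = X 0`, `tⱼ = X 1`, `tₖ = X 2`, `tₗ = X 3`). -/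
theorem potential_mem_crossing_ideal (k : Type*) [Field k] (p : Polynomial k) :
    (Polynomial.aeval (X 0 : MvPolynomial (Fin 4) k) p
        + Polynomial.aeval (X 1 : MvPolynomial (Fin 4) k) p
        - Polynomial.aeval (X 2 : MvPolynomial (Fin 4) k) p
        - Polynomial.aeval (X 3 : MvPolynomial (Fin 4) k) p)
      ∈ Ideal.span {(X 0 + X 1 - X 2 - X 3 : MvPolynomial (Fin 4) k),
          X 0 * X 1 - X 2 * X 3} := by
  set I := Ideal.span {(X 0 + X 1 - X 2 - X 3 : MvPolynomial (Fin 4) k),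
          X 0 * X 1 - X 2 * X 3} with hI
  induction p using Polynomial.induction_on' with
  | add p q hp hq =>
    have := I.add_mem hp hq
    simpa [map_add] using (by convert this using 1; ring)
  | monomial n a =>
    have h := pow_mem_crossing_ideal k n
    have : (C a : MvPolynomial (Fin 4) k) *
        ((X 0)^n + (X 1)^n - (X 2)^n - (X 3)^n) ∈ I := I.mul_mem_left _ h
    simpa [Polynomial.aeval_monomial, algebraMap_eq, mul_sub, mul_add] using this
end

section
/- Let k be a field and S = k[a, b, c, d] the polynomial ring in four variables. Then (a − c)·(a − b) and (a − c)·(c − d) both lie in the ideal (a + c − b − d, (a − b)(a − c)), so multiplication by a − c induces a well-defined S-linear map ρ : S/(a − b, c − d) → S/(a + c − b − d, (a − b)(a − c)); moreover ρ is injective. -/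
open MvPolynomial

set_option maxHeartbeats 1000000 in
/-- In `S = k[a, b, c, d]` (with `a = X 0`, `b = X 1`, `c = X 2`, `d = X 3`),
both `(a − c)(a − b)` and `(a − c)(c − d)` lie in the ideal
`(a + c − b − d, (a − b)(a − c))`, so multiplication by `a − c` induces a
well-defined `S`-linear map `ρ : S/(a − b, c − d) → S/(a + c − b − d, (a − b)(a − c))`;
moreover `ρ` is injective. -/
theorem reidemeister_I_rho_injective (k : Type*) [Field k] :
    ((X 0 - X 2) * (X 0 - X 1)
        ∈ Ideal.span {(X 0 + X 2 - X 1 - X 3 : MvPolynomial (Fin 4) k),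
            (X 0 - X 1) * (X 0 - X 2)}) ∧
    ((X 0 - X 2) * (X 2 - X 3)
        ∈ Ideal.span {(X 0 + X 2 - X 1 - X 3 : MvPolynomial (Fin 4) k),
            (X 0 - X 1) * (X 0 - X 2)}) ∧
    ∃ ρ : (MvPolynomial (Fin 4) k ⧸
            Ideal.span {(X 0 - X 1 : MvPolynomial (Fin 4) k), X 2 - X 3})
          →ₗ[MvPolynomial (Fin 4) k]
          (MvPolynomial (Fin 4) k ⧸
            Ideal.span {(X 0 + X 2 - X 1 - X 3 : MvPolynomial (Fin 4) k),
              (X 0 - X 1) * (X 0 - X 2)}),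
      (∀ f : MvPolynomial (Fin 4) k,
        ρ (Ideal.Quotient.mk _ f) = Ideal.Quotient.mk _ ((X 0 - X 2) * f)) ∧
      Function.Injective ρ := by
  set S := MvPolynomial (Fin 4) k
  set I : Ideal S := Ideal.span {(X 0 - X 1 : S), X 2 - X 3} with hI
  set J : Ideal S := Ideal.span {(X 0 + X 2 - X 1 - X 3 : S),
      (X 0 - X 1) * (X 0 - X 2)} with hJ
  have hmem1 : ((X 0 - X 2) * (X 0 - X 1) : S) ∈ J := by
    rw [hJ, Ideal.mem_span_pair]
    exact ⟨0, 1, by ring⟩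
  have hmem2 : ((X 0 - X 2) * (X 2 - X 3) : S) ∈ J := by
    rw [hJ, Ideal.mem_span_pair]
    exact ⟨X 0 - X 2, -1, by ring⟩
  refine ⟨hmem1, hmem2, ?_⟩
  -- the lift
  have hker : I ≤ LinearMap.ker ((X 0 - X 2 : S) • (J : Submodule S S).mkQ) := by
    rw [hI, Ideal.span_le]
    rintro x hx
    simp only [Set.mem_insert_iff, Set.mem_singleton_iff] at hx
    rcases hx with rfl | rfl
    · simp only [SetLike.mem_coe, LinearMap.mem_ker, LinearMap.smul_apply,
        Submodule.mkQ_apply]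
      rw [← Submodule.Quotient.mk_smul, Submodule.Quotient.mk_eq_zero]
      simpa [smul_eq_mul] using hmem1
    · simp only [SetLike.mem_coe, LinearMap.mem_ker, LinearMap.smul_apply,
        Submodule.mkQ_apply]
      rw [← Submodule.Quotient.mk_smul, Submodule.Quotient.mk_eq_zero]
      simpa [smul_eq_mul] using hmem2
  refine ⟨Submodule.liftQ (I : Submodule S S)
      ((X 0 - X 2 : S) • (J : Submodule S S).mkQ) hker, ?_, ?_⟩
  · intro f
    show ((X 0 - X 2 : S) • (J : Submodule S S).mkQ) f = _
    rw [LinearMap.smul_apply, Submodule.mkQ_apply, ← Submodule.Quotient.mk_smul]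
    rfl
  · rw [← LinearMap.ker_eq_bot, eq_bot_iff]
    intro x hx
    obtain ⟨f₀, rfl⟩ := Ideal.Quotient.mk_surjective x
    rw [LinearMap.mem_ker] at hx
    have hx' : ((X 0 - X 2 : S) • (J : Submodule S S).mkQ) f₀ = 0 := hx
    have h0 : ((X 0 - X 2) * f₀ : S) ∈ J := by
      rw [LinearMap.smul_apply, Submodule.mkQ_apply, ← Submodule.Quotient.mk_smul,
        Submodule.Quotient.mk_eq_zero] at hx'
      simpa [smul_eq_mul] using hx'
    rw [hJ, Ideal.mem_span_pair] at h0
    obtain ⟨p, q, hpq⟩ := h0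
    -- substitution d ↦ a + c - b
    set g : Fin 4 → S := fun i => if i = 3 then X 0 + X 2 - X 1 else X i with hg
    have hg0 : g 0 = X 0 := by simp [hg]
    have hg1 : g 1 = X 1 := by simp [hg]
    have hg2 : g 2 = X 2 := by simp [hg]
    have hg3 : g 3 = X 0 + X 2 - X 1 := by simp [hg]
    have h2 : aeval g p * aeval g (X 0 + X 2 - X 1 - X 3 : S)
        + aeval g q * (aeval g (X 0 - X 1 : S) * aeval g (X 0 - X 2 : S))
        = aeval g (X 0 - X 2 : S) * aeval g f₀ := by
      simpa only [map_add, map_mul] using congrArg (aeval g) hpq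
    have hσu : aeval g (X 0 + X 2 - X 1 - X 3 : S) = 0 := by
      simp only [map_add, map_sub, aeval_X, hg0, hg1, hg2, hg3]
      ring
    have e1 : aeval g (X 0 - X 1 : S) = X 0 - X 1 := by
      simp only [map_sub, aeval_X, hg0, hg1]
    have e2 : aeval g (X 0 - X 2 : S) = X 0 - X 2 := by
      simp only [map_sub, aeval_X, hg0, hg2]
    rw [hσu, e1, e2, mul_zero, zero_add] at h2
    have hne : (X 0 - X 2 : S) ≠ 0 := by
      intro h
      have := congrArg (eval (fun i : Fin 4 => if i = 0 then (1 : k) else 0)) h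
      simp at this
    have hfq : aeval g f₀ = aeval g q * (X 0 - X 1) :=
      mul_left_cancel₀ hne (by linear_combination -h2)
    -- mk I ∘ σ = mk I
    have hcomp : ∀ r : S, Ideal.Quotient.mk I (aeval g r) = Ideal.Quotient.mk I r := by
      intro r
      have hc : (Ideal.Quotient.mk I).comp (aeval g : S →ₐ[k] S).toRingHom
          = (Ideal.Quotient.mk I : S →+* S ⧸ I) := by
        apply MvPolynomial.ringHom_ext
        · intro r
          simp only [RingHom.comp_apply, AlgHom.toRingHom_eq_coe, RingHom.coe_coe,
            aeval_C]
          rw [MvPolynomial.algebraMap_eq]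
        · intro i
          simp only [RingHom.comp_apply, AlgHom.toRingHom_eq_coe, RingHom.coe_coe,
            aeval_X]
          by_cases h : i = 3
          · subst h
            rw [hg3, Ideal.Quotient.eq, hI, Ideal.mem_span_pair]
            exact ⟨1, 1, by ring⟩
          · have : g i = X i := by simp only [hg, if_neg h]
            rw [this]
      exact RingHom.congr_fun hc r
    have hf0 : Ideal.Quotient.mk I f₀ = 0 := by
      rw [← hcomp f₀, hfq, map_mul]
      have hab : Ideal.Quotient.mk I (X 0 - X 1 : S) = 0 :=
        Ideal.Quotient.eq_zero_iff_mem.mpr (Ideal.subset_span (Set.mem_insert _ _))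
      rw [hab, mul_zero]
    exact (Submodule.mem_bot _).mpr hf0
end

section
/- Let k be a field, S = k[a, b, c, d], and let M₁ = S/(a + c − b − d, (a − b)(a − c)), regarded as a module over the subalgebra k[a, b] ⊆ S. Let M₁' be the k[a, b]-submodule of M₁ generated by the class of 1, and let M₁'' be the S-submodule of M₁ generated by the class of a − c (equivalently, the image of the multiplication-by-(a − c) map), regarded as a k[a, b]-submodule. Then M₁ is the internal direct sum M₁ = M₁' ⊕ M₁'' of k[a, b]-submodules, and M₁' is a free k[a, b]-module of rank 1. -/
set_option maxHeartbeats 1000000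
set_option synthInstance.maxHeartbeats 1000000

open MvPolynomial

section Aux

variable (k : Type*) [Field k]

local notation "B" => MvPolynomial (Fin 2) k
local notation "S" => MvPolynomial (Fin 2) (MvPolynomial (Fin 2) k)

noncomputable def rtheta : S →ₐ[MvPolynomial (Fin 2) k] B :=
  aeval ![X 0, 2 * X 0 - X 1]

lemma rtheta_X0 : rtheta k (X 0) = X 0 := by
  simp [rtheta]

lemma rtheta_X1 : rtheta k (X 1) = 2 * X 0 - X 1 := by
  simp [rtheta]

lemma rtheta_C (p : B) : rtheta k (C p) = p := by
  simp [rtheta]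

lemma rtheta_g1 :
    rtheta k (C (X 0) + X 0 - C (X 1) - X 1) = 0 := by
  simp only [map_add, map_sub, rtheta_X0, rtheta_X1, rtheta_C]
  ring

lemma rtheta_t : rtheta k (C (X 0) - X 0) = 0 := by
  simp only [map_sub, rtheta_X0, rtheta_C, sub_self]

lemma rtheta_g2 :
    rtheta k ((C (X 0) - C (X 1)) * (C (X 0) - X 0)) = 0 := by
  rw [map_mul, rtheta_t, mul_zero]

lemma key_span (f : S) :
    f - C (rtheta k f) ∈
      Ideal.span {(C (X 0) + X 0 - C (X 1) - X 1 : S), C (X 0) - X 0} := by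
  set J := Ideal.span {(C (X 0) + X 0 - C (X 1) - X 1 : S), C (X 0) - X 0} with hJ
  have hg1 : (C (X 0) + X 0 - C (X 1) - X 1 : S) ∈ J :=
    Ideal.subset_span (Set.mem_insert _ _)
  have ht : (C (X 0) - X 0 : S) ∈ J :=
    Ideal.subset_span (Set.mem_insert_of_mem _ rfl)
  have hX : ∀ i : Fin 2, (X i : S) - C (rtheta k (X i)) ∈ J := by
    intro i
    fin_cases i
    · show (X 0 : S) - C (rtheta k (X 0)) ∈ J
      have : (X 0 : S) - C (rtheta k (X 0)) = -(C (X 0) - X 0) := by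
        rw [rtheta_X0]; ring
      rw [this]; exact neg_mem ht
    · show (X 1 : S) - C (rtheta k (X 1)) ∈ J
      have : (X 1 : S) - C (rtheta k (X 1)) =
          -(C (X 0) + X 0 - C (X 1) - X 1) - (C (X 0) - X 0) := by
        rw [rtheta_X1]; rw [map_sub, map_mul]; ring_nf
        simp [map_ofNat]
        ring
      rw [this]; exact sub_mem (neg_mem hg1) ht
  induction f using MvPolynomial.induction_on with
  | C p => rw [rtheta_C]; simp
  | add f g ihf ihg =>
      have : f + g - C (rtheta k (f + g)) =
          (f - C (rtheta k f)) + (g - C (rtheta k g)) := by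
        rw [map_add, map_add]; ring
      rw [this]; exact add_mem ihf ihg
  | mul_X f i ih =>
      have : f * X i - C (rtheta k (f * X i)) =
          (f - C (rtheta k f)) * X i + C (rtheta k f) * (X i - C (rtheta k (X i))) := by
        rw [map_mul, map_mul]; ring
      rw [this]
      exact add_mem (Ideal.mul_mem_right _ _ ih) (Ideal.mul_mem_left _ _ (hX i))

end Aux

/-- In `S = k[a, b, c, d]`, realized as `(k[a, b])[c, d]`
(so the base ring is `B = k[a, b] = MvPolynomial (Fin 2) k` with `a = C (X 0)`,
`b = C (X 1)`, `c = X 0`, `d = X 1`), let `M₁ = S/(a + c − b − d, (a − b)(a − c))`.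
Then `M₁` is the internal direct sum of the `k[a, b]`-submodule `M₁'` generated by the
class of `1` and the `S`-submodule `M₁''` generated by the class of `a − c`
(viewed as a `k[a, b]`-submodule); moreover `M₁'` is free of rank 1 over `k[a, b]`
(i.e. the `k[a, b]`-action on its generator, the class of `1`, is injective). -/
theorem reidemeister_I_M1_decomposition (k : Type*) [Field k] :
    ∀ I : Ideal (MvPolynomial (Fin 2) (MvPolynomial (Fin 2) k)),
      I = Ideal.span {(C (X 0) + X 0 - C (X 1) - X 1 :
            MvPolynomial (Fin 2) (MvPolynomial (Fin 2) k)),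
          (C (X 0) - C (X 1)) * (C (X 0) - X 0)} →
      (Submodule.span (MvPolynomial (Fin 2) k)
          {(1 : MvPolynomial (Fin 2) (MvPolynomial (Fin 2) k) ⧸ I)} ⊔
        Submodule.restrictScalars (MvPolynomial (Fin 2) k)
          (Submodule.span (MvPolynomial (Fin 2) (MvPolynomial (Fin 2) k))
            {Ideal.Quotient.mk I (C (X 0) - X 0)}) = ⊤) ∧
      (Submodule.span (MvPolynomial (Fin 2) k)
          {(1 : MvPolynomial (Fin 2) (MvPolynomial (Fin 2) k) ⧸ I)} ⊓
        Submodule.restrictScalars (MvPolynomial (Fin 2) k)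
          (Submodule.span (MvPolynomial (Fin 2) (MvPolynomial (Fin 2) k))
            {Ideal.Quotient.mk I (C (X 0) - X 0)}) = ⊥) ∧
      Function.Injective (fun q : MvPolynomial (Fin 2) k =>
        q • (1 : MvPolynomial (Fin 2) (MvPolynomial (Fin 2) k) ⧸ I)) := by
  intro I hI
  set B := MvPolynomial (Fin 2) k
  set S := MvPolynomial (Fin 2) B
  have hg1I : (C (X 0) + X 0 - C (X 1) - X 1 : S) ∈ I := by
    rw [hI]; exact Ideal.subset_span (Set.mem_insert _ _)
  have hker : ∀ f ∈ I, rtheta k f = 0 := by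
    intro f hf
    rw [hI] at hf
    have hle : Ideal.span {(C (X 0) + X 0 - C (X 1) - X 1 : S),
        (C (X 0) - C (X 1)) * (C (X 0) - X 0)} ≤
        RingHom.ker (rtheta k).toRingHom := by
      rw [Ideal.span_le]
      rintro x (rfl | rfl)
      · exact rtheta_g1 k
      · exact rtheta_g2 k
    exact hle hf
  set φ : (S ⧸ I) →+* B := Ideal.Quotient.lift I (rtheta k).toRingHom hker with hφ
  have hφmk : ∀ f : S, φ (Ideal.Quotient.mk I f) = rtheta k f := fun f =>
    Ideal.Quotient.lift_mk I _ _
  have hsmul1 : ∀ q : B, q • (1 : S ⧸ I) = Ideal.Quotient.mk I (C q) := by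
    intro q
    have h1 : (1 : S ⧸ I) = Ideal.Quotient.mk I 1 := (map_one _).symm
    rw [h1, ← Ideal.Quotient.mk_eq_mk, ← Submodule.Quotient.mk_smul, smul_eq_C_mul, mul_one,
      Ideal.Quotient.mk_eq_mk]
  have hsmulS : ∀ s x : S,
      s • Ideal.Quotient.mk I x = Ideal.Quotient.mk I (s * x) := by
    intro s x
    rw [← Ideal.Quotient.mk_eq_mk, ← Submodule.Quotient.mk_smul, smul_eq_mul,
      Ideal.Quotient.mk_eq_mk]
  have hφ1 : ∀ q : B, φ (q • (1 : S ⧸ I)) = q := by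
    intro q
    rw [hsmul1, hφmk, rtheta_C]
  refine ⟨?_, ?_, ?_⟩
  · -- sup = ⊤
    rw [eq_top_iff]
    rintro x -
    obtain ⟨f, rfl⟩ := Ideal.Quotient.mk_surjective x
    have hkey := key_span k f
    rw [Ideal.mem_span_pair] at hkey
    obtain ⟨u, v, huv⟩ := hkey
    have hmkg1 : Ideal.Quotient.mk I (u * (C (X 0) + X 0 - C (X 1) - X 1) : S) = 0 :=
      (Ideal.Quotient.eq_zero_iff_mem).2 (Ideal.mul_mem_left _ _ hg1I)
    have hfeq : f = C (rtheta k f) + (u * (C (X 0) + X 0 - C (X 1) - X 1) +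
        v * (C (X 0) - X 0)) := by rw [huv]; ring
    have hrw : Ideal.Quotient.mk I f =
        rtheta k f • (1 : S ⧸ I) + v • Ideal.Quotient.mk I (C (X 0) - X 0) := by
      rw [hsmul1, hsmulS]
      conv_lhs => rw [hfeq]
      rw [map_add, map_add, hmkg1, zero_add]
    rw [hrw]
    refine Submodule.add_mem_sup ?_ ?_
    · exact Submodule.smul_mem _ _ (Submodule.mem_span_singleton_self _)
    · exact Submodule.smul_mem _ _ (Submodule.mem_span_singleton_self _)
  · -- inf = ⊥
    rw [eq_bot_iff]
    rintro x hx
    rw [Submodule.mem_inf] at hx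
    obtain ⟨hx1, hx2⟩ := hx
    obtain ⟨q, rfl⟩ := Submodule.mem_span_singleton.1 hx1
    rw [Submodule.restrictScalars_mem, Submodule.mem_span_singleton] at hx2
    obtain ⟨s, hs⟩ := hx2
    have hφx : φ (q • (1 : S ⧸ I)) = 0 := by
      rw [← hs, hsmulS, hφmk, map_mul, rtheta_t, mul_zero]
    rw [hφ1] at hφx
    rw [hφx, zero_smul]
    exact Submodule.zero_mem ⊥
  · -- injectivity
    intro q q' h
    have h2 := congrArg φ h
    simpa only [hφ1] using h2
end

section
/- Let k be a field, S = k[a, b, c, d], and let M₁ = S/(a + c − b − d, (a − b)(a − c)), regarded as a module over the subalgebra k[a, b] ⊆ S. Let M₁'' be the S-submodule of M₁ generated by the class of a − c. Then M₁'' is the internal direct sum, over i ∈ ℕ, of the cyclic k[a, b]-submodules generated by the classes of cⁱ(a − c); moreover each of these cyclic k[a, b]-modules is isomorphic to k[a, b]/(a − b). -/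
set_option maxHeartbeats 2000000
set_option synthInstance.maxHeartbeats 2000000

open MvPolynomial

namespace RM1
variable {k : Type*} [Field k]

local notation "B" => MvPolynomial (Fin 2) k
local notation "S" => MvPolynomial (Fin 2) (MvPolynomial (Fin 2) k)

noncomputable def Jk (k : Type*) [Field k] : Ideal (MvPolynomial (Fin 2) k) :=
  Ideal.span {(X 0 - X 1 : MvPolynomial (Fin 2) k)}

noncomputable def Ik (k : Type*) [Field k] :
    Ideal (MvPolynomial (Fin 2) (MvPolynomial (Fin 2) k)) :=
  Ideal.span {(C (X 0) + X 0 - C (X 1) - X 1 : MvPolynomial (Fin 2) (MvPolynomial (Fin 2) k)),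
    (C (X 0) - C (X 1)) * (C (X 0) - X 0)}

noncomputable def ψ (k : Type*) [Field k] :
    MvPolynomial (Fin 2) (MvPolynomial (Fin 2) k) →+* Polynomial (MvPolynomial (Fin 2) k ⧸ Jk k) :=
  eval₂Hom ((Polynomial.C : _ →+* _).comp (Ideal.Quotient.mk (Jk k)))
    ![Polynomial.X,
      Polynomial.C (Ideal.Quotient.mk (Jk k) (X 0)) + Polynomial.X
        - Polynomial.C (Ideal.Quotient.mk (Jk k) (X 1))]

lemma psi_C (f : B) : ψ k (C f) = Polynomial.C (Ideal.Quotient.mk (Jk k) f) := by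
  simp [ψ]

lemma psi_X0 : ψ k (X 0) = Polynomial.X := by simp [ψ]

lemma psi_X1 : ψ k (X 1) = Polynomial.C (Ideal.Quotient.mk (Jk k) (X 0)) + Polynomial.X
    - Polynomial.C (Ideal.Quotient.mk (Jk k) (X 1)) := by
  simp [ψ]

lemma mk_a_eq_mk_b : Ideal.Quotient.mk (Jk k) (X 0) = Ideal.Quotient.mk (Jk k) (X 1) := by
  rw [Ideal.Quotient.eq]
  exact Ideal.subset_span rfl

lemma psi_ker : Ik k ≤ RingHom.ker (ψ k) := by
  rw [Ik, Ideal.span_le]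
  rintro x (rfl | rfl) <;>
    simp only [SetLike.mem_coe, RingHom.mem_ker, map_sub, map_add, map_mul, psi_C, psi_X0, psi_X1]
  · ring
  · rw [mk_a_eq_mk_b]; ring

lemma keyA (s : Finset ℕ) (m : ℕ → B)
    (h : (∑ j ∈ s, C (m j) * X 0 ^ j * (C (X 0) - X 0)) ∈ Ik k) :
    ∀ j ∈ s, m j ∈ Jk k := by
  have h0 : ψ k (∑ j ∈ s, C (m j) * X 0 ^ j * (C (X 0) - X 0)) = 0 := psi_ker h
  rw [map_sum] at h0
  simp only [map_mul, map_sub, map_pow, psi_C, psi_X0] at h0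
  set ab := Ideal.Quotient.mk (Jk k) (X 0 : MvPolynomial (Fin 2) k) with hab
  have h1 : (∑ j ∈ s, Polynomial.C (Ideal.Quotient.mk (Jk k) (m j)) * Polynomial.X ^ j) *
      (Polynomial.X - Polynomial.C ab) = 0 := by
    rw [Finset.sum_mul, ← neg_eq_zero, ← Finset.sum_neg_distrib]
    rw [← h0]
    apply Finset.sum_congr rfl
    intro j _
    ring
  haveI : Nontrivial (MvPolynomial (Fin 2) k ⧸ Jk k) := by
    apply Ideal.Quotient.nontrivial_iff.mpr
    intro htop
    have h1m : (1 : MvPolynomial (Fin 2) k) ∈ Jk k := htop ▸ trivial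
    obtain ⟨g, hg⟩ := Ideal.mem_span_singleton.mp h1m
    have := congrArg (eval (fun _ => (0:k))) hg
    simp at this
  have hq : (∑ j ∈ s, Polynomial.C (Ideal.Quotient.mk (Jk k) (m j)) * Polynomial.X ^ j) = 0 := by
    have hreg := (Polynomial.monic_X_sub_C ab).isRegular.right
    refine hreg ?_
    show _ * _ = 0 * _
    rw [zero_mul]; exact h1
  intro j hj
  rw [← Ideal.Quotient.eq_zero_iff_mem]
  have := congrArg (fun p => Polynomial.coeff p j) hq
  simpa [Polynomial.finset_sum_coeff, Polynomial.coeff_C_mul, Polynomial.coeff_X_pow,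
    Finset.sum_ite_eq, hj] using this

lemma keyB (f : B) (hf : f ∈ Jk k) (i : ℕ) :
    (C f * X 0 ^ i * (C (X 0) - X 0) :
      MvPolynomial (Fin 2) (MvPolynomial (Fin 2) k)) ∈ Ik k := by
  obtain ⟨g, rfl⟩ := Ideal.mem_span_singleton.mp hf
  have hmem : ((C (X 0) - C (X 1)) * (C (X 0) - X 0) :
      MvPolynomial (Fin 2) (MvPolynomial (Fin 2) k)) ∈ Ik k :=
    Ideal.subset_span (by simp)
  have := Ideal.mul_mem_left (Ik k) (C g * X 0 ^ i) hmem
  convert this using 1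
  push_cast [map_mul, map_sub]
  ring

/-- the class of `c^i (a - c)` -/
noncomputable def e (k : Type*) [Field k] (i : ℕ) :
    MvPolynomial (Fin 2) (MvPolynomial (Fin 2) k) ⧸ Ik k :=
  Ideal.Quotient.mk (Ik k) (X 0 ^ i * (C (X 0) - X 0))

lemma smul_mk (f : B) (x : S) :
    f • (Ideal.Quotient.mk (Ik k) x) = Ideal.Quotient.mk (Ik k) (C f * x) := by
  have h : (Ideal.Quotient.mk (Ik k) x) = Submodule.Quotient.mk x := rfl
  rw [h, ← Submodule.Quotient.mk_smul, smul_eq_C_mul]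
  rfl

lemma smul_mk' (r x : S) :
    r • (Ideal.Quotient.mk (Ik k) x) = Ideal.Quotient.mk (Ik k) (r * x) := by
  have h : (Ideal.Quotient.mk (Ik k) x) = Submodule.Quotient.mk x := rfl
  rw [h, ← Submodule.Quotient.mk_smul, smul_eq_mul]
  rfl

lemma smul_e_eq_zero_iff (f : B) (i : ℕ) : f • e k i = 0 ↔ f ∈ Jk k := by
  rw [e, smul_mk, Ideal.Quotient.eq_zero_iff_mem, ← mul_assoc]
  constructor
  · intro h
    have := keyA {i} (fun _ => f) (by simpa using h)
    exact this i (Finset.mem_singleton_self i)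
  · intro h
    exact keyB f h i

lemma ker_e (i : ℕ) :
    LinearMap.ker (LinearMap.toSpanSingleton B (MvPolynomial (Fin 2)
      (MvPolynomial (Fin 2) k) ⧸ Ik k) (e k i)) = Jk k := by
  ext f
  rw [LinearMap.mem_ker, LinearMap.toSpanSingleton_apply]
  exact smul_e_eq_zero_iff f i

/-- membership in a partial sup -/
lemma mem_sup_subset {t : Set ℕ}
    {x : MvPolynomial (Fin 2) (MvPolynomial (Fin 2) k) ⧸ Ik k}
    (hx : x ∈ ⨆ j ∈ t, Submodule.span B {e k j}) :
    ∃ l : ℕ →₀ B, (↑l.support : Set ℕ) ⊆ t ∧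
      x = Ideal.Quotient.mk (Ik k)
        (∑ j ∈ l.support, C (l j) * X 0 ^ j * (C (X 0) - X 0)) := by
  have himg : (⨆ j ∈ t, Submodule.span B {e k j}) = Submodule.span B (e k '' t) := by
    rw [Set.image_eq_iUnion, Submodule.span_iUnion₂]
  rw [himg] at hx
  obtain ⟨l, hl, rfl⟩ := Finsupp.mem_span_image_iff_linearCombination B |>.mp hx
  refine ⟨l, hl, ?_⟩
  rw [Finsupp.linearCombination_apply, Finsupp.sum, map_sum]
  apply Finset.sum_congr rfl
  intro j _
  rw [e, smul_mk, ← mul_assoc]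


lemma e_succ_mem (i : ℕ) : e k (i+1) ∈ ⨆ j : ℕ, Submodule.span B {e k j} :=
  le_iSup (fun j => Submodule.span B {e k j}) (i+1) (Submodule.mem_span_singleton_self _)

lemma mul_X_mem (n : Fin 2) {y : MvPolynomial (Fin 2) (MvPolynomial (Fin 2) k) ⧸ Ik k}
    (hy : y ∈ ⨆ j : ℕ, Submodule.span B {e k j}) :
    Ideal.Quotient.mk (Ik k) (X n) * y ∈ ⨆ j : ℕ, Submodule.span B {e k j} := by
  set Q := ⨆ j : ℕ, Submodule.span B {e k j} with hQ
  let μ : (MvPolynomial (Fin 2) (MvPolynomial (Fin 2) k) ⧸ Ik k) →ₗ[B]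
      (MvPolynomial (Fin 2) (MvPolynomial (Fin 2) k) ⧸ Ik k) :=
    LinearMap.mulLeft B (Ideal.Quotient.mk (Ik k) (X n))
  have key : ∀ i : ℕ, μ (e k i) ∈ Q := by
    intro i
    have hmul : μ (e k i) = Ideal.Quotient.mk (Ik k) (X n * (X 0 ^ i * (C (X 0) - X 0))) := by
      rw [e]
      show Ideal.Quotient.mk (Ik k) (X n) * _ = _
      rw [← map_mul]
    have hn : n = 0 ∨ n = 1 := by fin_cases n <;> simp
    rcases hn with rfl | rfl
    · rw [hmul]
      have : (X 0 * (X 0 ^ i * (C (X 0) - X 0)) :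
          MvPolynomial (Fin 2) (MvPolynomial (Fin 2) k)) =
          X 0 ^ (i+1) * (C (X 0) - X 0) := by ring
      rw [this]
      exact e_succ_mem i
    · rw [hmul]
      have hg1 : (C (X 0) + X 0 - C (X 1) - X 1 :
          MvPolynomial (Fin 2) (MvPolynomial (Fin 2) k)) ∈ Ik k :=
        Ideal.subset_span (by simp)
      have hg2 : ((C (X 0) - C (X 1)) * (C (X 0) - X 0) :
          MvPolynomial (Fin 2) (MvPolynomial (Fin 2) k)) ∈ Ik k :=
        Ideal.subset_span (by simp)
      have step1 : Ideal.Quotient.mk (Ik k) (X 1 * (X 0 ^ i * (C (X 0) - X 0))) =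
          Ideal.Quotient.mk (Ik k) ((C (X 0) + X 0 - C (X 1)) * (X 0 ^ i * (C (X 0) - X 0))) := by
        rw [Ideal.Quotient.eq]
        have hmem := Ideal.mul_mem_right (X 0 ^ i * (C (X 0) - X 0)) (Ik k) ((Ik k).neg_mem hg1)
        convert hmem using 1
        ring
      have step2 : Ideal.Quotient.mk (Ik k)
          ((C (X 0) - C (X 1)) * (X 0 ^ i * (C (X 0) - X 0))) = 0 := by
        rw [Ideal.Quotient.eq_zero_iff_mem]
        have hmem := Ideal.mul_mem_left (Ik k) (X 0 ^ i) hg2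
        convert hmem using 1
        ring
      have step3 : ((C (X 0) + X 0 - C (X 1)) * (X 0 ^ i * (C (X 0) - X 0)) :
          MvPolynomial (Fin 2) (MvPolynomial (Fin 2) k)) =
          (C (X 0) - C (X 1)) * (X 0 ^ i * (C (X 0) - X 0)) +
            X 0 ^ (i+1) * (C (X 0) - X 0) := by ring
      rw [step1, step3, map_add, step2, zero_add]
      exact e_succ_mem i
  have hmap : Submodule.map μ Q ≤ Q := by
    rw [hQ, Submodule.map_iSup]
    apply iSup_le
    intro i
    rw [Submodule.map_span, Set.image_singleton, Submodule.span_le,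
      Set.singleton_subset_iff]
    exact key i
  exact hmap ⟨y, hy, rfl⟩

lemma mul_mem_sup (r : MvPolynomial (Fin 2) (MvPolynomial (Fin 2) k)) :
    Ideal.Quotient.mk (Ik k) (r * (C (X 0) - X 0)) ∈ ⨆ j : ℕ, Submodule.span B {e k j} := by
  induction r using MvPolynomial.induction_on with
  | C f =>
      have : Ideal.Quotient.mk (Ik k) (C f * (C (X 0) - X 0)) = f • e k 0 := by
        rw [e, pow_zero, one_mul, smul_mk]
      rw [this]
      exact le_iSup (fun j => Submodule.span B {e k j}) 0
        (Submodule.smul_mem _ f (Submodule.mem_span_singleton_self _))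
  | add p q hp hq =>
      rw [add_mul, map_add]
      exact Submodule.add_mem _ hp hq
  | mul_X p n hp =>
      have : Ideal.Quotient.mk (Ik k) (p * X n * (C (X 0) - X 0)) =
          Ideal.Quotient.mk (Ik k) (X n) * Ideal.Quotient.mk (Ik k) (p * (C (X 0) - X 0)) := by
        rw [← map_mul]
        ring_nf
      rw [this]
      exact mul_X_mem n hp

end RM1

/-- In `S = k[a, b, c, d]`, realized as `(k[a, b])[c, d]`
(base ring `B = k[a, b] = MvPolynomial (Fin 2) k`, with `a = C (X 0)`, `b = C (X 1)`,
`c = X 0`, `d = X 1`), let `M₁ = S/(a + c − b − d, (a − b)(a − c))` and let `M₁''` be the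
`S`-submodule generated by the class of `a − c`.  Then `M₁''` is the internal direct sum,
over `i ∈ ℕ`, of the cyclic `k[a, b]`-submodules generated by the classes of `cⁱ(a − c)`,
and each of these is isomorphic as a `k[a, b]`-module to `k[a, b]/(a − b)`. -/
theorem reidemeister_I_M1pp_decomposition (k : Type*) [Field k] :
    ∀ I : Ideal (MvPolynomial (Fin 2) (MvPolynomial (Fin 2) k)),
      I = Ideal.span {(C (X 0) + X 0 - C (X 1) - X 1 :
            MvPolynomial (Fin 2) (MvPolynomial (Fin 2) k)),
          (C (X 0) - C (X 1)) * (C (X 0) - X 0)} →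
      ∀ N : ℕ → Submodule (MvPolynomial (Fin 2) k)
          (MvPolynomial (Fin 2) (MvPolynomial (Fin 2) k) ⧸ I),
        (∀ i : ℕ, N i = Submodule.span (MvPolynomial (Fin 2) k)
            {Ideal.Quotient.mk I ((X 0 : MvPolynomial (Fin 2)
              (MvPolynomial (Fin 2) k)) ^ i * (C (X 0) - X 0))}) →
        iSupIndep N ∧
        (⨆ i : ℕ, N i) = Submodule.restrictScalars (MvPolynomial (Fin 2) k)
          (Submodule.span (MvPolynomial (Fin 2) (MvPolynomial (Fin 2) k))
            {Ideal.Quotient.mk I (C (X 0) - X 0)}) ∧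
        ∀ i : ℕ, Nonempty
          ((MvPolynomial (Fin 2) k ⧸
              Ideal.span {(X 0 - X 1 : MvPolynomial (Fin 2) k)})
            ≃ₗ[MvPolynomial (Fin 2) k] N i) := by
  intro I hI N hN
  have hI2 : I = RM1.Ik k := hI
  subst hI2
  have hNe : ∀ i : ℕ, N i = Submodule.span (MvPolynomial (Fin 2) k) {RM1.e k i} := hN
  refine ⟨?_, ?_, ?_⟩
  · -- independence
    rw [iSupIndep_def]
    intro i
    rw [Submodule.disjoint_def]
    intro x hxi hxsup
    rw [hNe i] at hxi
    obtain ⟨f, rfl⟩ := Submodule.mem_span_singleton.mp hxi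
    simp_rw [hNe] at hxsup
    have hxsup' : f • RM1.e k i ∈
        ⨆ j ∈ {j : ℕ | j ≠ i}, Submodule.span (MvPolynomial (Fin 2) k) {RM1.e k j} := hxsup
    obtain ⟨l, hls, hle⟩ := RM1.mem_sup_subset hxsup'
    have hi_not : i ∉ l.support := fun h => (hls h) rfl
    set m : ℕ → MvPolynomial (Fin 2) k := fun j => if j = i then f else - l j with hm
    have hzero : Ideal.Quotient.mk (RM1.Ik k)
        (∑ j ∈ insert i l.support, C (m j) * X 0 ^ j * (C (X 0) - X 0)) = 0 := by
      rw [Finset.sum_insert hi_not, map_add]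
      have h1 : Ideal.Quotient.mk (RM1.Ik k) (C (m i) * X 0 ^ i * (C (X 0) - X 0)) =
          f • RM1.e k i := by
        have hmi : m i = f := if_pos rfl
        rw [hmi, RM1.e, RM1.smul_mk, mul_assoc]
      have h2 : Ideal.Quotient.mk (RM1.Ik k)
          (∑ j ∈ l.support, C (m j) * X 0 ^ j * (C (X 0) - X 0)) =
          - Ideal.Quotient.mk (RM1.Ik k)
            (∑ j ∈ l.support, C (l j) * X 0 ^ j * (C (X 0) - X 0)) := by
        rw [← map_neg, ← Finset.sum_neg_distrib]
        congr 1
        apply Finset.sum_congr rfl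
        intro j hj
        have hji : j ≠ i := fun h => hi_not (h ▸ hj)
        have hmj : m j = - l j := if_neg hji
        rw [hmj, map_neg]
        ring
      rw [h1, h2, ← hle]
      simp
    have hsum := Ideal.Quotient.eq_zero_iff_mem.mp hzero
    have hfJ : f ∈ RM1.Jk k := by
      have := RM1.keyA _ m hsum i (Finset.mem_insert_self _ _)
      simpa [hm] using this
    exact (RM1.smul_e_eq_zero_iff f i).mpr hfJ
  · -- the sup is M₁''
    apply le_antisymm
    · apply iSup_le
      intro i
      rw [hNe i, Submodule.span_le]
      intro y hy
      rw [Set.mem_singleton_iff] at hy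
      subst hy
      rw [SetLike.mem_coe, Submodule.restrictScalars_mem]
      have : RM1.e k i = (X 0 ^ i : MvPolynomial (Fin 2) (MvPolynomial (Fin 2) k)) •
          Ideal.Quotient.mk (RM1.Ik k) (C (X 0) - X 0) := by
        rw [RM1.smul_mk', RM1.e]
      rw [this]
      exact Submodule.smul_mem _ _ (Submodule.mem_span_singleton_self _)
    · intro x hx
      rw [Submodule.restrictScalars_mem] at hx
      obtain ⟨r, rfl⟩ := Submodule.mem_span_singleton.mp hx
      rw [RM1.smul_mk']
      have := RM1.mul_mem_sup (k := k) r
      simp_rw [hNe]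
      exact this
  · -- cyclic pieces
    intro i
    refine ⟨?_⟩
    have h1 := Submodule.quotEquivOfEq (RM1.Jk k) _ (RM1.ker_e (k := k) i).symm
    have h2 := LinearMap.quotKerEquivRange
      (LinearMap.toSpanSingleton (MvPolynomial (Fin 2) k) _ (RM1.e k i))
    have h3 : N i = LinearMap.range
        (LinearMap.toSpanSingleton (MvPolynomial (Fin 2) k) _ (RM1.e k i)) :=
      (hNe i).trans (LinearMap.span_singleton_eq_range _ _ _)
    exact (h1.trans h2).trans (LinearEquiv.ofEq _ _ h3.symm)
end

section
/- Let k be a field, R = k[a, b, c, d, e], R' = k[a, b, c, d] ⊆ R, and let M₁ = R/(a − b, (c − d)(e − d)). Let M₁' be the R'-submodule of M₁ generated by the class of 1, and let M₁'' be the R-submodule of M₁ generated by the class of e − d, regarded as an R'-submodule by restriction of scalars. Then M₁ is the internal direct sum M₁ = M₁' ⊕ M₁'' of R'-submodules. -/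
open MvPolynomial Polynomial

/-!
Every `p ∈ A[X]` splits as `C (p.eval x) + (X - C x) * (p /ₘ (X - C x))`, so the two submodules
span `A[X] ⧸ I`. If moreover `C (p.eval x) ∈ I` for all `p ∈ I`, then a common element
`C r ≡ f * (X - C x)` evaluates at `x` to `C r ∈ I`, so the sum is direct. For
`I = (a - b, (c - d)(e - d))` and `x = d` this holds because evaluation at `d` kills the second
generator and fixes the first.
-/

namespace Polynomial

variable {A : Type*} [CommRing A] {I : Ideal A[X]}

lemma quotient_smul_mk (q g : A[X]) :
    q • Ideal.Quotient.mk I g = Ideal.Quotient.mk I (q * g) := by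
  rw [← Ideal.Quotient.mk_eq_mk, ← Submodule.Quotient.mk_smul]
  rfl

lemma quotient_smul_one (r : A) : r • (1 : A[X] ⧸ I) = Ideal.Quotient.mk I (C r) := by
  rw [← map_one (Ideal.Quotient.mk I), ← Ideal.Quotient.mk_eq_mk, ← Submodule.Quotient.mk_smul,
    smul_eq_C_mul, mul_one]
  rfl

lemma mem_span_one_quotient_iff {m : A[X] ⧸ I} :
    m ∈ Submodule.span A {1} ↔ ∃ r : A, Ideal.Quotient.mk I (C r) = m := by
  simp only [Submodule.mem_span_singleton, quotient_smul_one]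

variable (I) (x : A)

lemma codisjoint_span_one_span_X_sub_C :
    Codisjoint (Submodule.span A {(1 : A[X] ⧸ I)})
      ((Submodule.span A[X] {Ideal.Quotient.mk I (X - C x)}).restrictScalars A) := by
  rw [codisjoint_iff, eq_top_iff]
  rintro m -
  obtain ⟨p, rfl⟩ := Ideal.Quotient.mk_surjective m
  have hp : p = C (p.eval x) + (p /ₘ (X - C x)) * (X - C x) := by
    rw [← modByMonic_X_sub_C_eq_C_eval, mul_comm]
    exact (modByMonic_add_div p _).symm
  rw [hp, map_add]
  refine Submodule.add_mem_sup (mem_span_one_quotient_iff.2 ⟨_, rfl⟩) ?_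
  exact Submodule.mem_span_singleton.2 ⟨_, quotient_smul_mk _ _⟩

lemma disjoint_span_one_span_X_sub_C (hI : ∀ p ∈ I, C (p.eval x) ∈ I) :
    Disjoint (Submodule.span A {(1 : A[X] ⧸ I)})
      ((Submodule.span A[X] {Ideal.Quotient.mk I (X - C x)}).restrictScalars A) := by
  rw [Submodule.disjoint_def]
  rintro m hm1 hm2
  obtain ⟨r, rfl⟩ := mem_span_one_quotient_iff.1 hm1
  obtain ⟨f, hf⟩ := Submodule.mem_span_singleton.1 hm2
  rw [quotient_smul_mk, Ideal.Quotient.eq] at hf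
  have hr := hI _ (I.neg_mem hf)
  simp only [neg_sub, eval_sub, eval_C, eval_mul, eval_X, sub_self, mul_zero, sub_zero] at hr
  exact Ideal.Quotient.eq_zero_iff_mem.2 hr

lemma C_eval_mem_span_C_C_mul_X_sub_C (u v : A) {p : A[X]}
    (hp : p ∈ Ideal.span {C u, C v * (X - C x)}) :
    C (p.eval x) ∈ Ideal.span {C u, C v * (X - C x)} := by
  set J : Ideal A[X] := Ideal.span {C u, C v * (X - C x)}
  suffices J ≤ J.comap ((C : A →+* A[X]).comp (evalRingHom x)) from this hp
  rw [Ideal.span_le, Set.insert_subset_iff, Set.singleton_subset_iff]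
  constructor
  · simpa using Ideal.subset_span (Set.mem_insert _ _)
  · simp

end Polynomial

/-- In `R = k[a, b, c, d, e]`, realized as `(k[a, b, c, d])[e]`
(so `R' = k[a, b, c, d] = MvPolynomial (Fin 4) k` is the base ring,
`a = C (X 0)`, `b = C (X 1)`, `c = C (X 2)`, `d = C (X 3)`, `e = Polynomial.X`),
let `M₁ = R/(a − b, (c − d)(e − d))`.  Then `M₁` is the internal direct sum of the
`R'`-submodule generated by the class of `1` and the `R`-submodule generated by the
class of `e − d` (viewed as an `R'`-submodule by restriction of scalars). -/
theorem IIb_M1_decomposition (k : Type*) [Field k] :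
    ∀ I : Ideal (Polynomial (MvPolynomial (Fin 4) k)),
      I = Ideal.span {(Polynomial.C (X 0) - Polynomial.C (X 1) :
            Polynomial (MvPolynomial (Fin 4) k)),
          (Polynomial.C (X 2) - Polynomial.C (X 3)) *
            (Polynomial.X - Polynomial.C (X 3))} →
      (Submodule.span (MvPolynomial (Fin 4) k)
          {(1 : Polynomial (MvPolynomial (Fin 4) k) ⧸ I)} ⊔
        Submodule.restrictScalars (MvPolynomial (Fin 4) k)
          (Submodule.span (Polynomial (MvPolynomial (Fin 4) k))
            {Ideal.Quotient.mk I (Polynomial.X - Polynomial.C (X 3))}) = ⊤) ∧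
      (Submodule.span (MvPolynomial (Fin 4) k)
          {(1 : Polynomial (MvPolynomial (Fin 4) k) ⧸ I)} ⊓
        Submodule.restrictScalars (MvPolynomial (Fin 4) k)
          (Submodule.span (Polynomial (MvPolynomial (Fin 4) k))
            {Ideal.Quotient.mk I (Polynomial.X - Polynomial.C (X 3))}) = ⊥) := by
  intro I hI
  have hgens : I = Ideal.span {Polynomial.C (X 0 - X 1 : MvPolynomial (Fin 4) k),
      Polynomial.C (X 2 - X 3) * (Polynomial.X - Polynomial.C (X 3))} := by
    simp only [hI, map_sub]
  refine ⟨codisjoint_iff.1 (codisjoint_span_one_span_X_sub_C I _),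
    disjoint_iff.1 (disjoint_span_one_span_X_sub_C I _ ?_)⟩
  rw [hgens]
  exact fun p => C_eval_mem_span_C_C_mul_X_sub_C _ _ _
end

section
/- Let k be a field, R = k[a, b, c, d, e], R' = k[a, b, c, d] ⊆ R, and let M₃ = R/((a − b)(e − b), (c − d)(e − d)). Let M₃' be the R'-submodule of M₃ generated by the classes of 1 and e, and let M₃'' be the R-submodule of M₃ generated by the class of (e − b)(e − d), regarded as an R'-submodule by restriction of scalars. Then M₃ is the internal direct sum M₃ = M₃' ⊕ M₃'' of R'-submodules. -/
/-!
Write `A = k[a, b, c, d]`, `f₁ = (a - b)(e - b)`, `f₂ = (c - d)(e - d)`, `I = (f₁, f₂)` and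
`g = (e - b)(e - d)`. Division by the monic quadratic `g` writes every class as an
`A`-combination of `1` and `e` plus a multiple of `g`. For the intersection, reduce the
coefficients of `p f₁ + w f₂` modulo `e - d` and `e - b`: every element of `I` is
`u f₁ + v f₂ + Q g` with `u, v ∈ A`. So if `ℓ` of degree `≤ 1` is congruent to a multiple of
`g`, then `ℓ - u f₁ - v f₂` has degree `≤ 1` and is divisible by `g`, hence vanishes: `ℓ ∈ I`.
-/

namespace Polynomial

variable {A : Type*} [CommRing A]

theorem smul_mk_eq_mk_C_mul (I : Ideal A[X]) (s : A) (f : A[X]) :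
    s • Ideal.Quotient.mk I f = Ideal.Quotient.mk I (C s * f) := by
  rw [← smul_eq_C_mul]
  rfl

theorem smul_mk_eq_mk_mul (I : Ideal A[X]) (q f : A[X]) :
    q • Ideal.Quotient.mk I f = Ideal.Quotient.mk I (q * f) :=
  rfl

theorem span_one_X_sup_span_mk_eq_top (I : Ideal A[X]) {g : A[X]} (hg : g.Monic)
    (hg2 : g.natDegree = 2) :
    Submodule.span A {(1 : A[X] ⧸ I), Ideal.Quotient.mk I X} ⊔
      (Submodule.span A[X] {Ideal.Quotient.mk I g}).restrictScalars A = ⊤ := by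
  rw [eq_top_iff]
  rintro x -
  obtain ⟨f, rfl⟩ := Ideal.Quotient.mk_surjective x
  have hrem : (f %ₘ g).natDegree ≤ 1 := by
    have := natDegree_modByMonic_lt f hg (by rintro rfl; simp at hg2)
    omega
  obtain ⟨a, b, hab⟩ := exists_eq_X_add_C_of_natDegree_le_one hrem
  have hf : Ideal.Quotient.mk I f =
      b • 1 + a • Ideal.Quotient.mk I X + (f /ₘ g) • Ideal.Quotient.mk I g := by
    conv_lhs => rw [← modByMonic_add_div f g, hab]
    rw [← map_one (Ideal.Quotient.mk I), smul_mk_eq_mk_C_mul, smul_mk_eq_mk_C_mul,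
      smul_mk_eq_mk_mul, ← map_add, ← map_add]
    ring_nf
  rw [hf]
  refine add_mem (Submodule.mem_sup_left (add_mem ?_ ?_)) (Submodule.mem_sup_right ?_)
  · exact Submodule.smul_mem _ _ (Submodule.subset_span (Set.mem_insert _ _))
  · exact Submodule.smul_mem _ _ (Submodule.subset_span (Set.mem_insert_of_mem _ rfl))
  · exact Submodule.smul_mem _ _ (Submodule.mem_span_singleton_self _)

theorem exists_eq_C_mul_add_C_mul_add_mul_of_mem_span {r s β δ : A} {h : A[X]}
    (hh : h ∈ Ideal.span {C r * (X - C β), C s * (X - C δ)}) :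
    ∃ u v : A, ∃ Q : A[X],
      h = C u * (C r * (X - C β)) + C v * (C s * (X - C δ)) + Q * ((X - C β) * (X - C δ)) := by
  obtain ⟨p, w, rfl⟩ := Ideal.mem_span_pair.mp hh
  obtain ⟨p', hp'⟩ := X_sub_C_dvd_sub_C_eval (p := p) (a := δ)
  obtain ⟨w', hw'⟩ := X_sub_C_dvd_sub_C_eval (p := w) (a := β)
  refine ⟨p.eval δ, w.eval β, C r * p' + C s * w', ?_⟩
  linear_combination (C r * (X - C β)) * hp' + (C s * (X - C δ)) * hw'

theorem span_one_X_inf_span_mk_eq_bot {r s β δ : A} {I : Ideal A[X]}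
    (hI : I = Ideal.span {C r * (X - C β), C s * (X - C δ)}) :
    Submodule.span A {(1 : A[X] ⧸ I), Ideal.Quotient.mk I X} ⊓
      (Submodule.span A[X] {Ideal.Quotient.mk I ((X - C β) * (X - C δ))}).restrictScalars A
      = ⊥ := by
  rw [eq_bot_iff]
  rintro x ⟨hx₁, hx₂⟩
  obtain ⟨a, b, rfl⟩ := Submodule.mem_span_pair.mp hx₁
  obtain ⟨q, hq⟩ := Submodule.mem_span_singleton.mp hx₂
  rw [← map_one (Ideal.Quotient.mk I), smul_mk_eq_mk_C_mul, smul_mk_eq_mk_C_mul, ← map_add,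
    smul_mk_eq_mk_mul] at hq
  obtain ⟨u, v, Q, hQ⟩ := exists_eq_C_mul_add_C_mul_add_mul_of_mem_span
    (hI ▸ Ideal.Quotient.eq.mp hq.symm)
  have hlin : C a * 1 + C b * X - C u * (C r * (X - C β)) - C v * (C s * (X - C δ)) = 0 := by
    nontriviality A
    by_contra hne
    refine ((monic_X_sub_C β).mul (monic_X_sub_C δ)).not_dvd_of_natDegree_lt hne ?_
      ⟨q + Q, by linear_combination hQ⟩
    rw [(monic_X_sub_C β).natDegree_mul (monic_X_sub_C δ), natDegree_X_sub_C,
      natDegree_X_sub_C]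
    have hdeg : (C a * 1 + C b * X - C u * (C r * (X - C β)) -
        C v * (C s * (X - C δ))).natDegree ≤ 1 := by
      compute_degree
    omega
  rw [← map_one (Ideal.Quotient.mk I), smul_mk_eq_mk_C_mul, smul_mk_eq_mk_C_mul, ← map_add,
    Submodule.mem_bot, Ideal.Quotient.eq_zero_iff_mem]
  exact hI ▸ Ideal.mem_span_pair.mpr ⟨C u, C v, by linear_combination -hlin⟩

end Polynomial

open MvPolynomial Polynomial

/-- In `R = k[a, b, c, d, e]`, realized as `(k[a, b, c, d])[e]`
(so `R' = k[a, b, c, d] = MvPolynomial (Fin 4) k` is the base ring,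
`a = C (X 0)`, `b = C (X 1)`, `c = C (X 2)`, `d = C (X 3)`, `e = Polynomial.X`),
let `M₃ = R/((a − b)(e − b), (c − d)(e − d))`.  Then `M₃` is the internal direct sum
of the `R'`-submodule `M₃'` generated by the classes of `1` and `e` and the
`R`-submodule `M₃''` generated by the class of `(e − b)(e − d)`
(viewed as an `R'`-submodule by restriction of scalars). -/
theorem IIb_M3_decomposition (k : Type*) [Field k] :
    ∀ I : Ideal (Polynomial (MvPolynomial (Fin 4) k)),
      I = Ideal.span {(Polynomial.C (X 0) - Polynomial.C (X 1)) *
            (Polynomial.X - Polynomial.C (X 1)),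
          (Polynomial.C (X 2) - Polynomial.C (X 3)) *
            (Polynomial.X - Polynomial.C (X 3))} →
      (Submodule.span (MvPolynomial (Fin 4) k)
          {(1 : Polynomial (MvPolynomial (Fin 4) k) ⧸ I),
            Ideal.Quotient.mk I Polynomial.X} ⊔
        Submodule.restrictScalars (MvPolynomial (Fin 4) k)
          (Submodule.span (Polynomial (MvPolynomial (Fin 4) k))
            {Ideal.Quotient.mk I ((Polynomial.X - Polynomial.C (X 1)) *
              (Polynomial.X - Polynomial.C (X 3)))}) = ⊤) ∧
      (Submodule.span (MvPolynomial (Fin 4) k)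
          {(1 : Polynomial (MvPolynomial (Fin 4) k) ⧸ I),
            Ideal.Quotient.mk I Polynomial.X} ⊓
        Submodule.restrictScalars (MvPolynomial (Fin 4) k)
          (Submodule.span (Polynomial (MvPolynomial (Fin 4) k))
            {Ideal.Quotient.mk I ((Polynomial.X - Polynomial.C (X 1)) *
              (Polynomial.X - Polynomial.C (X 3)))}) = ⊥) := by
  intro I hI
  rw [← Polynomial.C_sub, ← Polynomial.C_sub] at hI
  have hg : ((Polynomial.X - Polynomial.C (X 1 : MvPolynomial (Fin 4) k)) *
      (Polynomial.X - Polynomial.C (X 3))).natDegree = 2 := by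
    compute_degree!
  exact ⟨span_one_X_sup_span_mk_eq_top I ((monic_X_sub_C _).mul (monic_X_sub_C _)) hg,
    span_one_X_inf_span_mk_eq_bot hI⟩
end

section
/- Let k be a field and R = k[a, b, c, d, e]. Then (e − b)(a − b) and (e − b)(c − d)(e − d) both lie in the ideal ((a − b)(e − b), (c − d)(e − d)) of R, so multiplication by e − b induces a well-defined R-linear map from M₁ = R/(a − b, (c − d)(e − d)) to M₃ = R/((a − b)(e − b), (c − d)(e − d)). The restriction of this map to the R-submodule M₁'' of M₁ generated by the class of e − d is injective, and its image is the R-submodule M₃'' of M₃ generated by the class of (e − b)(e − d). -/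
open MvPolynomial Polynomial

private noncomputable abbrev IIbσ (k : Type*) [Field k] :
    MvPolynomial (Fin 4) k →+* MvPolynomial (Fin 4) k :=
  (MvPolynomial.rename (![1, 1, 3, 3] : Fin 4 → Fin 4)).toRingHom

private lemma IIb_sub_rename_mem (k : Type*) [Field k] (s : MvPolynomial (Fin 4) k) :
    s - IIbσ k s ∈ Ideal.span {(X 0 - X 1 : MvPolynomial (Fin 4) k), X 2 - X 3} := by
  induction s using MvPolynomial.induction_on with
  | C r => simp
  | add p q hp hq =>
    have : p + q - IIbσ k (p + q) = (p - IIbσ k p) + (q - IIbσ k q) := by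
      simp [map_add]; ring
    rw [this]; exact add_mem hp hq
  | mul_X p n hp =>
    have hX : X n - IIbσ k (X n) ∈
        Ideal.span {(X 0 - X 1 : MvPolynomial (Fin 4) k), X 2 - X 3} := by
      have : IIbσ k (X n) = X ((![1,1,3,3] : Fin 4 → Fin 4) n) := by
        simp [IIbσ, MvPolynomial.rename_X]
      rw [this]
      fin_cases n
      · exact Ideal.subset_span (by simp)
      · simp [Matrix.cons_val_one]
      · exact Ideal.subset_span (by simp [show ((![1,1,3,3] : Fin 4 → Fin 4) 2) = 3 from rfl])
      · simp [show ((![1,1,3,3] : Fin 4 → Fin 4) 3) = 3 from rfl]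
    have : p * X n - IIbσ k (p * X n)
        = p * (X n - IIbσ k (X n)) + IIbσ k (X n) * (p - IIbσ k p) := by
      simp [map_mul]; ring
    rw [this]
    exact add_mem (Ideal.mul_mem_left _ _ hX) (Ideal.mul_mem_left _ _ hp)

private lemma IIb_key (k : Type*) [Field k] (t : Polynomial (MvPolynomial (Fin 4) k))
    (h : t * ((Polynomial.X - Polynomial.C (X 1)) * (Polynomial.X - Polynomial.C (X 3))) ∈
      Ideal.span {(Polynomial.C (X 0) - Polynomial.C (X 1)) *
            (Polynomial.X - Polynomial.C (X 1)),
          (Polynomial.C (X 2) - Polynomial.C (X 3)) *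
            (Polynomial.X - Polynomial.C (X 3))}) :
    t * (Polynomial.X - Polynomial.C (X 3)) ∈
      Ideal.span {(Polynomial.C (X 0) - Polynomial.C (X 1) :
            Polynomial (MvPolynomial (Fin 4) k)),
          (Polynomial.C (X 2) - Polynomial.C (X 3)) *
            (Polynomial.X - Polynomial.C (X 3))} := by
  obtain ⟨u, v, huv⟩ := Ideal.mem_span_pair.mp h
  have hσ0 : IIbσ k (X 0 - X 1) = 0 := by
    simp [IIbσ, map_sub, MvPolynomial.rename_X, show ((![1,1,3,3] : Fin 4 → Fin 4) 0) = 1 from rfl,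
      show ((![1,1,3,3] : Fin 4 → Fin 4) 1) = 1 from rfl]
  have hσ2 : IIbσ k (X 2 - X 3) = 0 := by
    simp [IIbσ, map_sub, MvPolynomial.rename_X, show ((![1,1,3,3] : Fin 4 → Fin 4) 2) = 3 from rfl,
      show ((![1,1,3,3] : Fin 4 → Fin 4) 3) = 3 from rfl]
  -- map the relation coefficientwise by σ
  have hmap := congrArg (Polynomial.map (IIbσ k)) huv
  have hC0 : Polynomial.map (IIbσ k) (Polynomial.C (X 0) - Polynomial.C (X 1)) = 0 := by
    rw [← map_sub Polynomial.C, Polynomial.map_C, hσ0, map_zero]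
  have hC2 : Polynomial.map (IIbσ k) (Polynomial.C (X 2) - Polynomial.C (X 3)) = 0 := by
    rw [← map_sub Polynomial.C, Polynomial.map_C, hσ2, map_zero]
  rw [Polynomial.map_add, Polynomial.map_mul, Polynomial.map_mul, Polynomial.map_mul,
    Polynomial.map_mul, hC0, hC2] at hmap
  simp only [mul_zero, zero_mul, add_zero, zero_add, Polynomial.map_mul, Polynomial.map_sub,
    Polynomial.map_X, Polynomial.map_C] at hmap
  -- conclude map σ t = 0
  have ht0 : Polynomial.map (IIbσ k) t = 0 := by
    have h1 : (Polynomial.X - Polynomial.C (IIbσ k (X 1)) :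
        Polynomial (MvPolynomial (Fin 4) k)) ≠ 0 := Polynomial.X_sub_C_ne_zero _
    have h3 : (Polynomial.X - Polynomial.C (IIbσ k (X 3)) :
        Polynomial (MvPolynomial (Fin 4) k)) ≠ 0 := Polynomial.X_sub_C_ne_zero _
    rcases mul_eq_zero.mp hmap.symm with h' | h'
    · exact h'
    · rcases mul_eq_zero.mp h' with h'' | h''
      · exact absurd h'' h1
      · exact absurd h'' h3
  -- so every coefficient of t lies in the span of (a-b, c-d)
  have hcoeff : ∀ n, t.coeff n ∈
      Ideal.span {(X 0 - X 1 : MvPolynomial (Fin 4) k), X 2 - X 3} := by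
    intro n
    have hz : IIbσ k (t.coeff n) = 0 := by
      have := congrArg (fun p => Polynomial.coeff p n) ht0
      simpa [Polynomial.coeff_map] using this
    have := IIb_sub_rename_mem k (t.coeff n)
    rwa [hz, sub_zero] at this
  have htmem : t ∈ Ideal.span {(Polynomial.C (X 0) - Polynomial.C (X 1) :
      Polynomial (MvPolynomial (Fin 4) k)), Polynomial.C (X 2) - Polynomial.C (X 3)} := by
    have : t ∈ Ideal.map (Polynomial.C :
        MvPolynomial (Fin 4) k →+* Polynomial (MvPolynomial (Fin 4) k))
        (Ideal.span {(X 0 - X 1 : MvPolynomial (Fin 4) k), X 2 - X 3}) :=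
      Ideal.mem_map_C_iff.mpr hcoeff
    rwa [Ideal.map_span, Set.image_insert_eq, Set.image_singleton, map_sub, map_sub] at this
  obtain ⟨α, β, hab⟩ := Ideal.mem_span_pair.mp htmem
  refine Ideal.mem_span_pair.mpr ⟨α * (Polynomial.X - Polynomial.C (X 3)), β, ?_⟩
  rw [← hab]; ring

set_option maxHeartbeats 1000000 in
/-- In `R = k[a, b, c, d, e]`, realized as `(k[a, b, c, d])[e]`
(`a = C (X 0)`, `b = C (X 1)`, `c = C (X 2)`, `d = C (X 3)`, `e = Polynomial.X`),
both `(e − b)(a − b)` and `(e − b)(c − d)(e − d)` lie in the ideal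
`I₃ = ((a − b)(e − b), (c − d)(e − d))`, so multiplication by `e − b` induces a
well-defined `R`-linear map from `M₁ = R/(a − b, (c − d)(e − d))` to `M₃ = R/I₃`.
Its restriction to the `R`-submodule `M₁''` generated by the class of `e − d` is
injective, with image the `R`-submodule `M₃''` generated by the class of
`(e − b)(e − d)`. -/
theorem IIb_M1_to_M3 (k : Type*) [Field k] :
    ∀ I₁ I₃ : Ideal (Polynomial (MvPolynomial (Fin 4) k)),
      I₁ = Ideal.span {(Polynomial.C (X 0) - Polynomial.C (X 1) :
            Polynomial (MvPolynomial (Fin 4) k)),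
          (Polynomial.C (X 2) - Polynomial.C (X 3)) *
            (Polynomial.X - Polynomial.C (X 3))} →
      I₃ = Ideal.span {(Polynomial.C (X 0) - Polynomial.C (X 1)) *
            (Polynomial.X - Polynomial.C (X 1)),
          (Polynomial.C (X 2) - Polynomial.C (X 3)) *
            (Polynomial.X - Polynomial.C (X 3))} →
      ((Polynomial.X - Polynomial.C (X 1)) *
          (Polynomial.C (X 0) - Polynomial.C (X 1)) ∈ I₃) ∧
      ((Polynomial.X - Polynomial.C (X 1)) *
          ((Polynomial.C (X 2) - Polynomial.C (X 3)) *
            (Polynomial.X - Polynomial.C (X 3))) ∈ I₃) ∧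
      ∃ g : (Polynomial (MvPolynomial (Fin 4) k) ⧸ I₁)
            →ₗ[Polynomial (MvPolynomial (Fin 4) k)]
            (Polynomial (MvPolynomial (Fin 4) k) ⧸ I₃),
        (∀ f : Polynomial (MvPolynomial (Fin 4) k),
          g (Ideal.Quotient.mk I₁ f) =
            Ideal.Quotient.mk I₃ ((Polynomial.X - Polynomial.C (X 1)) * f)) ∧
        Set.InjOn g (Submodule.span (Polynomial (MvPolynomial (Fin 4) k))
          {Ideal.Quotient.mk I₁ (Polynomial.X - Polynomial.C (X 3))}) ∧
        Submodule.map g (Submodule.span (Polynomial (MvPolynomial (Fin 4) k))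
            {Ideal.Quotient.mk I₁ (Polynomial.X - Polynomial.C (X 3))}) =
          Submodule.span (Polynomial (MvPolynomial (Fin 4) k))
            {Ideal.Quotient.mk I₃ ((Polynomial.X - Polynomial.C (X 1)) *
              (Polynomial.X - Polynomial.C (X 3)))} := by
  intro I₁ I₃ hI₁ hI₃
  set R := Polynomial (MvPolynomial (Fin 4) k)
  have hmem1 : (Polynomial.X - Polynomial.C (X 1)) *
      (Polynomial.C (X 0) - Polynomial.C (X 1)) ∈ I₃ := by
    rw [hI₃]
    exact Ideal.mem_span_pair.mpr ⟨1, 0, by ring⟩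
  have hmem2 : (Polynomial.X - Polynomial.C (X 1)) *
      ((Polynomial.C (X 2) - Polynomial.C (X 3)) *
        (Polynomial.X - Polynomial.C (X 3))) ∈ I₃ := by
    rw [hI₃]
    exact Ideal.mem_span_pair.mpr ⟨0, Polynomial.X - Polynomial.C (X 1), by ring⟩
  refine ⟨hmem1, hmem2, ?_⟩
  set φ : R →ₗ[R] R ⧸ I₃ :=
    (Polynomial.X - Polynomial.C (X 1) : R) • (Submodule.mkQ (I₃ : Submodule R R)) with hφ
  have hφ_apply : ∀ f : R, φ f = Ideal.Quotient.mk I₃ ((Polynomial.X - Polynomial.C (X 1)) * f) := by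
    intro f
    rw [hφ, LinearMap.smul_apply, Submodule.mkQ_apply, ← Submodule.Quotient.mk_smul,
      smul_eq_mul, Ideal.Quotient.mk_eq_mk]
  have hker : (I₁ : Submodule R R) ≤ LinearMap.ker φ := by
    rw [hI₁]
    rw [Ideal.span_le]
    rintro x (rfl | rfl)
    · rw [SetLike.mem_coe, LinearMap.mem_ker, hφ_apply, Ideal.Quotient.eq_zero_iff_mem]
      exact hmem1
    · rw [SetLike.mem_coe, LinearMap.mem_ker, hφ_apply, Ideal.Quotient.eq_zero_iff_mem]
      exact hmem2
  refine ⟨Submodule.liftQ (I₁ : Submodule R R) φ hker, ?_, ?_, ?_⟩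
  case _ =>
    intro f
    rw [← Ideal.Quotient.mk_eq_mk, Submodule.liftQ_apply, hφ_apply]
  · -- injectivity
    intro x hx y hy hxy
    obtain ⟨r, rfl⟩ := Submodule.mem_span_singleton.mp hx
    obtain ⟨s, rfl⟩ := Submodule.mem_span_singleton.mp hy
    have hmk : ∀ w : R, w • Ideal.Quotient.mk I₁ (Polynomial.X - Polynomial.C (X 3))
        = Ideal.Quotient.mk I₁ (w * (Polynomial.X - Polynomial.C (X 3))) := by
      intro w
      rw [← Ideal.Quotient.mk_eq_mk, ← Ideal.Quotient.mk_eq_mk, ← Submodule.Quotient.mk_smul,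
        smul_eq_mul]
    rw [hmk, hmk] at hxy ⊢
    rw [← Ideal.Quotient.mk_eq_mk, ← Ideal.Quotient.mk_eq_mk, Submodule.liftQ_apply,
      Submodule.liftQ_apply, hφ_apply, hφ_apply, Ideal.Quotient.eq] at hxy
    have hkey : (r - s) * ((Polynomial.X - Polynomial.C (X 1)) *
        (Polynomial.X - Polynomial.C (X 3))) ∈ I₃ := by
      have : (Polynomial.X - Polynomial.C (X 1)) * (r * (Polynomial.X - Polynomial.C (X 3))) -
          (Polynomial.X - Polynomial.C (X 1)) * (s * (Polynomial.X - Polynomial.C (X 3)))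
          = (r - s) * ((Polynomial.X - Polynomial.C (X 1)) *
            (Polynomial.X - Polynomial.C (X 3))) := by ring
      rwa [this] at hxy
    rw [hI₃] at hkey
    rw [Ideal.Quotient.eq]
    have heq : r * (Polynomial.X - Polynomial.C (X 3)) - s * (Polynomial.X - Polynomial.C (X 3))
        = (r - s) * (Polynomial.X - Polynomial.C (X 3)) := by ring
    rw [heq, hI₁]
    exact IIb_key k (r - s) hkey
  · -- image
    rw [Submodule.map_span, Set.image_singleton]
    congr 1
end

section
/- Let k be a field and R' = k[a, b, c, d]. Let N₁ = R'/(a − b + c − d, (b − d)(c − d)) and N₂ = R'/(a − b, c − d), and let π : N₁ → N₂ be the canonical surjective R'-linear projection (well defined since (a − b + c − d, (b − d)(c − d)) ⊆ (a − b, c − d)). Then π does not split: there is no R'-linear map σ : N₂ → N₁ with π ∘ σ = id. -/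
open MvPolynomial

/-- In `R' = k[a, b, c, d]` (with `a = X 0`, `b = X 1`, `c = X 2`, `d = X 3`), let
`N₁ = R'/(a − b + c − d, (b − d)(c − d))` and `N₂ = R'/(a − b, c − d)`, and let
`π : N₁ → N₂` be the canonical `R'`-linear projection (characterized by sending the
class of `f` modulo the first ideal to its class modulo the second).  Then `π` does
not split: there is no `R'`-linear `σ : N₂ → N₁` with `π ∘ σ = id`. -/
theorem IIb_projection_does_not_split (k : Type*) [Field k] :
    ∀ I J : Ideal (MvPolynomial (Fin 4) k),
      I = Ideal.span {(X 0 - X 1 + X 2 - X 3 : MvPolynomial (Fin 4) k),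
          (X 1 - X 3) * (X 2 - X 3)} →
      J = Ideal.span {(X 0 - X 1 : MvPolynomial (Fin 4) k), X 2 - X 3} →
      ∀ π : (MvPolynomial (Fin 4) k ⧸ I) →ₗ[MvPolynomial (Fin 4) k]
            (MvPolynomial (Fin 4) k ⧸ J),
        (∀ f : MvPolynomial (Fin 4) k,
          π (Ideal.Quotient.mk I f) = Ideal.Quotient.mk J f) →
        ¬ ∃ σ : (MvPolynomial (Fin 4) k ⧸ J) →ₗ[MvPolynomial (Fin 4) k]
              (MvPolynomial (Fin 4) k ⧸ I),
            π.comp σ = LinearMap.id := by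
  intro I J hI hJ π hπ ⟨σ, hσ⟩
  obtain ⟨g, hg⟩ := Ideal.Quotient.mk_surjective (σ 1)
  -- the substitution a ↦ X, b ↦ 0, c ↦ -X, d ↦ 0
  set v : Fin 4 → Polynomial k := ![Polynomial.X, 0, -Polynomial.X, 0] with hv
  set φ : MvPolynomial (Fin 4) k →+* Polynomial k := (aeval v).toRingHom with hφ
  have hφ0 : φ (X 0) = Polynomial.X := by simp [hφ, hv]
  have hφ1 : φ (X 1) = 0 := by simp [hφ, hv]
  have hφ2 : φ (X 2) = -Polynomial.X := by simp [hφ, hv]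
  have hφ3 : φ (X 3) = 0 := by simp [hφ, hv]
  -- I is contained in the kernel of φ
  have hIker : I ≤ RingHom.ker φ := by
    rw [hI, Ideal.span_le]
    rintro f (rfl | rfl) <;>
      simp [RingHom.mem_ker, map_sub, map_add, map_mul, hφ0, hφ1, hφ2, hφ3]
  -- J is contained in the kernel of evaluation-at-0 composed with φ
  set ψ : MvPolynomial (Fin 4) k →+* k := (Polynomial.evalRingHom 0).comp φ with hψ
  have hJker : J ≤ RingHom.ker ψ := by
    rw [hJ, Ideal.span_le]
    rintro f (rfl | rfl) <;>
      simp [hψ, RingHom.mem_ker, map_sub, hφ0, hφ1, hφ2, hφ3]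
  -- g ≡ 1 mod J
  have e1 : Ideal.Quotient.mk J g = 1 := by
    have h := LinearMap.congr_fun hσ (1 : MvPolynomial (Fin 4) k ⧸ J)
    rw [LinearMap.comp_apply, ← hg, hπ g, LinearMap.id_apply] at h
    exact h
  have hgJ : g - 1 ∈ J := by
    have := Ideal.Quotient.eq.mp (e1.trans (map_one (Ideal.Quotient.mk J)).symm)
    exact this
  -- (a - b) * g ∈ I
  have hab : Ideal.Quotient.mk J (X 0 - X 1) = 0 := by
    rw [Ideal.Quotient.eq_zero_iff_mem, hJ]
    exact Ideal.subset_span (Or.inl rfl)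
  have hgI : (X 0 - X 1) * g ∈ I := by
    have h1 : σ ((X 0 - X 1 : MvPolynomial (Fin 4) k) • (1 : MvPolynomial (Fin 4) k ⧸ J))
        = (X 0 - X 1 : MvPolynomial (Fin 4) k) • σ 1 := map_smul σ _ _
    have h2 : (X 0 - X 1 : MvPolynomial (Fin 4) k) • (1 : MvPolynomial (Fin 4) k ⧸ J) = 0 := by
      have : (X 0 - X 1 : MvPolynomial (Fin 4) k) • (1 : MvPolynomial (Fin 4) k ⧸ J)
          = Ideal.Quotient.mk J ((X 0 - X 1) * 1) := rfl
      rw [this, mul_one]; exact hab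
    rw [h2, map_zero, ← hg] at h1
    have h3 : (X 0 - X 1 : MvPolynomial (Fin 4) k) • Ideal.Quotient.mk I g
        = Ideal.Quotient.mk I ((X 0 - X 1) * g) := rfl
    rw [h3] at h1
    exact (Ideal.Quotient.eq_zero_iff_mem).mp h1.symm
  -- hence X * φ g = 0 in k[X], so φ g = 0
  have hφg : φ g = 0 := by
    have h0 : φ ((X 0 - X 1) * g) = 0 := hIker hgI
    rw [map_mul, map_sub, hφ0, hφ1, sub_zero] at h0
    exact (mul_eq_zero.mp h0).resolve_left Polynomial.X_ne_zero
  -- but ψ g = 1, while ψ g = eval 0 (φ g) = 0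
  have hψg : ψ g = 1 := by
    have h0 : ψ (g - 1) = 0 := hJker hgJ
    rw [map_sub, map_one, sub_eq_zero] at h0
    exact h0
  rw [hψ, RingHom.comp_apply, hφg] at hψg
  simp at hψg
end
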